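/- arXiv:gr-qc/0611100 — 12 statements merged into one kernel-verified Lean document; each statement's English description precedes it below -/
import Mathlib

section
/- Let c>0, m₀>0, Φ₀∈ℝ, let Φ:ℝ⁴→ℝ be continuously differentiable, and let x:I→ℝ⁴ be a proper-time parametrized worldline, i.e. (ẋ⁰)²−(ẋ¹)²−(ẋ²)²−(ẋ³)² = c² on I. Define the position-dependent mass m := m₀·exp((Φ−Φ₀)/c²). Then the projected equation of motion ẍ^μ = (η^{μν} − ẋ^μẋ^ν/c²)·∂_νΦ(x) holds on I if and only if d/dτ( m(x(τ))·ẋ^μ(τ) ) = m(x(τ))·η^{μν}∂_νΦ(x(τ)) holds on I for μ = 0,1,2,3. -/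
/-- The Minkowski metric `η = diag(1,-1,-1,-1)` on `ℝ⁴`
(numerically the same with upper or lower indices). -/
def minkowski (μ ν : Fin 4) : ℝ := if μ = ν then (if μ = 0 then 1 else -1) else 0

/-- For a proper-time parametrized worldline, the projected equation of motion
`ẍ^μ = (η^{μν} - ẋ^μ ẋ^ν / c²) ∂_ν Φ(x)` holds iff
`d/dτ (m(x(τ)) ẋ^μ(τ)) = m(x(τ)) η^{μν} ∂_ν Φ(x(τ))` holds,
where `m = m₀ exp((Φ - Φ₀)/c²)` is the position-dependent mass. -/
theorem projected_eom_iff_variable_mass_form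
    (c m₀ Φ₀ : ℝ) (hc : 0 < c) (hm₀ : 0 < m₀)
    (Φ : (Fin 4 → ℝ) → ℝ) (hΦ : ContDiff ℝ 1 Φ)
    (I : Set ℝ) (hI : Convex ℝ I)
    (x x' x'' : ℝ → Fin 4 → ℝ)
    (hx' : ∀ τ ∈ I, ∀ μ, HasDerivAt (fun s => x s μ) (x' τ μ) τ)
    (hx'' : ∀ τ ∈ I, ∀ μ, HasDerivAt (fun s => x' s μ) (x'' τ μ) τ)
    (hnorm : ∀ τ ∈ I,
      (x' τ 0)^2 - (x' τ 1)^2 - (x' τ 2)^2 - (x' τ 3)^2 = c^2) :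
    (∀ τ ∈ I, ∀ μ,
        x'' τ μ = ∑ ν, (minkowski μ ν - x' τ μ * x' τ ν / c^2) *
          fderiv ℝ Φ (x τ) (Pi.single ν 1))
    ↔
    (∀ τ ∈ I, ∀ μ, HasDerivAt
        (fun s => m₀ * Real.exp ((Φ (x s) - Φ₀) / c^2) * x' s μ)
        (m₀ * Real.exp ((Φ (x τ) - Φ₀) / c^2) *
          ∑ ν, minkowski μ ν * fderiv ℝ Φ (x τ) (Pi.single ν 1)) τ) := by
  have hc2 : (c : ℝ) ^ 2 ≠ 0 := pow_ne_zero 2 hc.ne'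
  -- derivative of Φ ∘ x
  have hΦd : ∀ τ ∈ I, HasDerivAt (fun s => Φ (x s))
      (∑ ν, fderiv ℝ Φ (x τ) (Pi.single ν 1) * x' τ ν) τ := by
    intro τ hτ
    have hx : HasDerivAt (fun s => x s) (x' τ) τ :=
      hasDerivAt_pi.2 fun μ => hx' τ hτ μ
    have hF := ((hΦ.differentiable one_ne_zero (x τ)).hasFDerivAt).comp_hasDerivAt τ hx
    have hsum : fderiv ℝ Φ (x τ) (x' τ)
        = ∑ ν, fderiv ℝ Φ (x τ) (Pi.single ν 1) * x' τ ν := by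
      have := (fderiv ℝ Φ (x τ)).toLinearMap.pi_apply_eq_sum_univ (x' τ)
      simp only [ContinuousLinearMap.coe_coe] at this
      rw [this]
      refine Finset.sum_congr rfl fun ν _ => ?_
      have : (fun j => if ν = j then (1:ℝ) else 0) = Pi.single ν 1 := by
        ext j; simp [Pi.single_apply, eq_comm]
      rw [this, smul_eq_mul, mul_comm]
    rw [hsum] at hF
    exact hF
  -- derivative of the mass
  have hmd : ∀ τ ∈ I, HasDerivAt
      (fun s => m₀ * Real.exp ((Φ (x s) - Φ₀) / c ^ 2))
      (m₀ * Real.exp ((Φ (x τ) - Φ₀) / c ^ 2) *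
        ((∑ ν, fderiv ℝ Φ (x τ) (Pi.single ν 1) * x' τ ν) / c ^ 2)) τ := by
    intro τ hτ
    have h1 : HasDerivAt (fun s => (Φ (x s) - Φ₀) / c ^ 2)
        ((∑ ν, fderiv ℝ Φ (x τ) (Pi.single ν 1) * x' τ ν) / c ^ 2) τ :=
      ((hΦd τ hτ).sub_const Φ₀).div_const _
    have h2 := (h1.exp).const_mul m₀
    exact h2.congr_deriv (by ring)
  -- derivative of the product
  have hprod : ∀ τ ∈ I, ∀ μ, HasDerivAt
      (fun s => m₀ * Real.exp ((Φ (x s) - Φ₀) / c ^ 2) * x' s μ)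
      (m₀ * Real.exp ((Φ (x τ) - Φ₀) / c ^ 2) *
        ((∑ ν, fderiv ℝ Φ (x τ) (Pi.single ν 1) * x' τ ν) / c ^ 2) * x' τ μ
       + m₀ * Real.exp ((Φ (x τ) - Φ₀) / c ^ 2) * x'' τ μ) τ := by
    intro τ hτ μ
    exact (hmd τ hτ).mul (hx'' τ hτ μ)
  have hmpos : ∀ τ, 0 < m₀ * Real.exp ((Φ (x τ) - Φ₀) / c ^ 2) :=
    fun τ => mul_pos hm₀ (Real.exp_pos _)
  constructor
  · intro h τ hτ μ
    have heq := h τ hτ μ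
    have := hprod τ hτ μ
    convert this using 1
    rw [heq]
    simp only [Fin.sum_univ_four]
    field_simp
    ring
  · intro h τ hτ μ
    have heq := (hprod τ hτ μ).unique (h τ hτ μ)
    -- solve for x'' τ μ
    have hm := (hmpos τ).ne'
    have : x'' τ μ = (∑ ν, minkowski μ ν * fderiv ℝ Φ (x τ) (Pi.single ν 1))
        - ((∑ ν, fderiv ℝ Φ (x τ) (Pi.single ν 1) * x' τ ν) / c ^ 2) * x' τ μ := by
      have h2 : m₀ * Real.exp ((Φ (x τ) - Φ₀) / c ^ 2) * x'' τ μ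
          = m₀ * Real.exp ((Φ (x τ) - Φ₀) / c ^ 2) *
            ((∑ ν, minkowski μ ν * fderiv ℝ Φ (x τ) (Pi.single ν 1))
              - ((∑ ν, fderiv ℝ Φ (x τ) (Pi.single ν 1) * x' τ ν) / c ^ 2) * x' τ μ) := by
        rw [mul_sub]; linarith [heq]
      exact mul_left_cancel₀ hm h2
    rw [this]
    simp only [Fin.sum_univ_four]
    field_simp
    ring
end

section
/- Let c>0 and let φ:ℝ³→ℝ be continuously differentiable. If a twice differentiable trajectory t↦x⃗(t)∈ℝ³ with ‖x⃗′(t)‖ < c satisfies x⃗″(t) = −(1 − ‖x⃗′(t)‖²/c²)·∇φ(x⃗(t)) on an interval I, then the function t ↦ γ(t)·exp(φ(x⃗(t))/c²) is constant on I, where γ(t) = 1/√(1−‖x⃗′(t)‖²/c²). Equivalently, γ(t) = γ₀·exp(−φ(x⃗(t))/c²) for a constant γ₀. -/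
/-- If a trajectory with speed below `c` satisfies
`x⃗″(t) = -(1 - ‖x⃗′(t)‖²/c²) ∇φ(x⃗(t))` on an interval `I`, then
`t ↦ γ(t)·exp(φ(x⃗(t))/c²)` is constant on `I`; equivalently
`γ(t) = γ₀·exp(-φ(x⃗(t))/c²)` for a constant `γ₀`. -/
theorem gamma_exp_phi_constant_of_eom
    (c : ℝ) (hc : 0 < c)
    (φ : (Fin 3 → ℝ) → ℝ) (hφ : ContDiff ℝ 1 φ)
    (I : Set ℝ) (hI : Convex ℝ I)
    (q q' : ℝ → Fin 3 → ℝ)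
    (hq' : ∀ t ∈ I, ∀ i, HasDerivAt (fun s => q s i) (q' t i) t)
    (hv : ∀ t ∈ I, ∑ i, (q' t i)^2 < c^2)
    (γ : ℝ → ℝ)
    (hγ : γ = fun t => 1 / Real.sqrt (1 - (∑ i, (q' t i)^2) / c^2))
    (heom : ∀ t ∈ I, ∀ i, HasDerivAt (fun s => q' s i)
      (-(1 - (∑ j, (q' t j)^2) / c^2) * fderiv ℝ φ (q t) (Pi.single i 1)) t) :
    (∀ t₁ ∈ I, ∀ t₂ ∈ I,
        γ t₁ * Real.exp (φ (q t₁) / c^2) = γ t₂ * Real.exp (φ (q t₂) / c^2)) ∧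
    (∃ γ₀ : ℝ, ∀ t ∈ I, γ t = γ₀ * Real.exp (-(φ (q t)) / c^2)) := by
  set F : ℝ → ℝ := fun t => γ t * Real.exp (φ (q t) / c^2) with hF
  have key : ∀ t ∈ I, HasDerivAt F 0 t := by
    intro t ht
    set u : ℝ := ∑ i, (q' t i)^2 with hu
    set s0 : ℝ := 1 - u / c^2 with hs0
    set D : ℝ := ∑ i, q' t i * fderiv ℝ φ (q t) (Pi.single i 1) with hD
    have hs0pos : 0 < s0 := by
      have := hv t ht
      have hc2 : (0:ℝ) < c^2 := by positivity
      rw [hs0, sub_pos, div_lt_one hc2]; exact this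
    have hsqpos : 0 < Real.sqrt s0 := Real.sqrt_pos.2 hs0pos
    -- derivative of u(s)
    have hus : HasDerivAt (fun s => ∑ i, (q' s i)^2) (-2 * s0 * D) t := by
      have h1 : HasDerivAt (fun s => ∑ i, (q' s i)^2)
          (∑ i, (2:ℕ) * q' t i ^ 1 *
            (-(1 - (∑ j, (q' t j)^2) / c^2) * fderiv ℝ φ (q t) (Pi.single i 1))) t :=
        HasDerivAt.fun_sum fun i _ => (heom t ht i).fun_pow 2
      convert h1 using 1
      rw [hD, Finset.mul_sum]
      apply Finset.sum_congr rfl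
      intro i _
      push_cast
      ring
    -- derivative of s0(s)
    have hss : HasDerivAt (fun s => 1 - (∑ i, (q' s i)^2) / c^2) (2 * s0 * D / c^2) t := by
      have := (hus.div_const (c^2)).const_sub 1
      refine this.congr_deriv (Eq.symm ?_)
      ring
    -- derivative of sqrt
    have hsqrt : HasDerivAt (fun s => Real.sqrt (1 - (∑ i, (q' s i)^2) / c^2))
        ((2 * s0 * D / c^2) / (2 * Real.sqrt s0)) t := by
      have := hss.sqrt (by rw [← hu, ← hs0]; exact ne_of_gt hs0pos)
      simpa [← hu, ← hs0] using this
    -- derivative of γ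
    have hγt : HasDerivAt γ (-(γ t) * (D / c^2)) t := by
      have h2 : HasDerivAt (fun s => (Real.sqrt (1 - (∑ i, (q' s i)^2) / c^2))⁻¹)
          (-((2 * s0 * D / c^2) / (2 * Real.sqrt s0)) / (Real.sqrt (1 - (∑ i, (q' t i)^2) / c^2))^2) t :=
        hsqrt.inv (by rw [← hu, ← hs0]; exact ne_of_gt hsqpos)
      have hγeq : γ = fun s => (Real.sqrt (1 - (∑ i, (q' s i)^2) / c^2))⁻¹ := by
        rw [hγ]; funext s; rw [one_div]
      rw [hγeq]
      convert h2 using 1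
      have hsq2 : (Real.sqrt s0)^2 = s0 := Real.sq_sqrt hs0pos.le
      simp only [← hu, ← hs0, hsq2]
      field_simp
    -- derivative of φ ∘ q
    have hq : HasDerivAt q (q' t) t := hasDerivAt_pi.2 (hq' t ht)
    have hφq : HasDerivAt (fun s => φ (q s)) D t := by
      have h3 := ((hφ.differentiable one_ne_zero (q t)).hasFDerivAt).comp_hasDerivAt t hq
      refine h3.congr_deriv (Eq.symm ?_)
      rw [hD]
      have : q' t = ∑ i, Pi.single i (q' t i) := (Finset.univ_sum_single (q' t)).symm
      conv_rhs => rw [this]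
      rw [map_sum]
      apply Finset.sum_congr rfl
      intro i _
      have : Pi.single i (q' t i) = q' t i • (Pi.single i 1 : Fin 3 → ℝ) := by
        rw [← Pi.single_smul, smul_eq_mul, mul_one]
      rw [this, map_smul, smul_eq_mul]
    have hE : HasDerivAt (fun s => Real.exp (φ (q s) / c^2))
        (Real.exp (φ (q t) / c^2) * (D / c^2)) t := by
      exact (hφq.div_const (c^2)).exp
    have := hγt.mul hE
    refine this.congr_deriv (Eq.symm ?_)
    ring
  have hconst : ∀ t₁ ∈ I, ∀ t₂ ∈ I, F t₁ = F t₂ := by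
    intro t₁ ht₁ t₂ ht₂
    have hle := hI.norm_image_sub_le_of_norm_hasDerivWithin_le
      (f' := fun _ => (0:ℝ)) (C := 0) (fun x hx => (key x hx).hasDerivWithinAt)
      (fun x _ => by simp) ht₁ ht₂
    simp only [norm_zero, zero_mul] at hle
    have : F t₂ - F t₁ = 0 := by
      have := norm_le_zero_iff.1 hle
      linarith [abs_nonneg (F t₂ - F t₁), this]
    linarith
  constructor
  · exact fun t₁ h₁ t₂ h₂ => hconst t₁ h₁ t₂ h₂
  · rcases Set.eq_empty_or_nonempty I with hIe | ⟨t₀, ht₀⟩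
    · exact ⟨0, fun t ht => by rw [hIe] at ht; exact absurd ht (Set.notMem_empty t)⟩
    · refine ⟨γ t₀ * Real.exp (φ (q t₀) / c^2), fun t ht => ?_⟩
      have h := hconst t ht t₀ ht₀
      simp only [hF] at h
      calc γ t = (γ t * Real.exp (φ (q t) / c^2)) * Real.exp (-(φ (q t)) / c^2) := by
            rw [mul_assoc, ← Real.exp_add]
            have : φ (q t) / c^2 + -(φ (q t)) / c^2 = 0 := by ring
            rw [this, Real.exp_zero, mul_one]
        _ = (γ t₀ * Real.exp (φ (q t₀) / c^2)) * Real.exp (-(φ (q t)) / c^2) := by rw [h]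
end

section
/- (Proposition 2.) Let c>0, m>0, and let φ:ℝ³→ℝ be continuously differentiable. Suppose a twice differentiable trajectory t↦x⃗(t)∈ℝ³ with ‖x⃗′(t)‖ < c satisfies x⃗″(t) = −(1 − ‖x⃗′(t)‖²/c²)·∇φ(x⃗(t)) on I, and let γ₀ be the constant with γ(t) = γ₀·exp(−φ(x⃗(t))/c²) on I, where γ(t)=1/√(1−‖x⃗′(t)‖²/c²). Then x⃗ satisfies the Newtonian-form equation m·x⃗″(t) = −∇φ̃(x⃗(t)) on I, where φ̃ := (m c²/2)·γ₀^{−2}·exp(2φ/c²). -/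
/-- Proposition 2: if a trajectory with speed below `c` satisfies
`x⃗″(t) = -(1 - ‖x⃗′(t)‖²/c²) ∇φ(x⃗(t))` on `I`, with `γ(t) = γ₀ exp(-φ(x⃗(t))/c²)`,
then it satisfies the Newtonian-form equation `m x⃗″(t) = -∇φ̃(x⃗(t))`,
where `φ̃ = (m c²/2) γ₀⁻² exp(2φ/c²)`. -/
theorem eom_newtonian_form
    (c m : ℝ) (hc : 0 < c) (hm : 0 < m)
    (φ : (Fin 3 → ℝ) → ℝ) (hφ : ContDiff ℝ 1 φ)
    (I : Set ℝ) (hI : Convex ℝ I)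
    (q q' : ℝ → Fin 3 → ℝ)
    (hq' : ∀ t ∈ I, ∀ i, HasDerivAt (fun s => q s i) (q' t i) t)
    (hv : ∀ t ∈ I, ∑ i, (q' t i)^2 < c^2)
    (γ : ℝ → ℝ)
    (hγ : γ = fun t => 1 / Real.sqrt (1 - (∑ i, (q' t i)^2) / c^2))
    (heom : ∀ t ∈ I, ∀ i, HasDerivAt (fun s => q' s i)
      (-(1 - (∑ j, (q' t j)^2) / c^2) * fderiv ℝ φ (q t) (Pi.single i 1)) t)
    (γ₀ : ℝ)
    (hγ₀ : ∀ t ∈ I, γ t = γ₀ * Real.exp (-(φ (q t)) / c^2)) :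
    ∀ t ∈ I, ∀ i, HasDerivAt (fun s => m * q' s i)
      (-(fderiv ℝ (fun pt => (m * c^2 / 2) * (γ₀^2)⁻¹ * Real.exp (2 * φ pt / c^2))
          (q t) (Pi.single i 1))) t := by
  intro t ht i
  set p := q t with hp
  set v2 := ∑ j, (q' t j)^2 with hv2
  have hu : 0 < 1 - v2 / c^2 := by
    have := hv t ht
    have hc2 : 0 < c^2 := by positivity
    rw [sub_pos, div_lt_one hc2]
    exact this
  -- γ₀² * exp(-2φ/c²) = 1/(1 - v2/c²)
  have hγt : γ t = 1 / Real.sqrt (1 - v2 / c^2) := by rw [hγ]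
  have hγ0 := hγ₀ t ht
  have hsq : Real.sqrt (1 - v2/c^2) ^ 2 = 1 - v2/c^2 := Real.sq_sqrt hu.le
  have hγpos : 0 < γ t := by
    rw [hγt]; positivity
  have hγ₀pos : 0 < γ₀ := by
    have hepos : 0 < Real.exp (-(φ p) / c^2) := Real.exp_pos _
    nlinarith [hγ0, hγpos]
  have key : (γ₀^2)⁻¹ * Real.exp (2 * φ p / c^2) = 1 - v2 / c^2 := by
    have h1 : γ₀ = γ t * Real.exp (φ p / c^2) := by
      rw [hγ0]
      rw [mul_assoc, ← Real.exp_add]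
      simp [neg_div, hp]
    have h2 : γ₀^2 = (γ t)^2 * Real.exp (2 * φ p / c^2) := by
      rw [h1, mul_pow, ← Real.exp_nat_mul]
      ring_nf
    have h3 : (γ t)^2 = ((1 : ℝ) - v2/c^2)⁻¹ := by
      rw [hγt, div_pow, one_pow, hsq, one_div]
    rw [h2, h3, mul_inv]
    rw [inv_inv]
    field_simp
  -- derivative of the potential
  have hdφ : HasFDerivAt φ (fderiv ℝ φ p) p :=
    ((hφ.differentiable one_ne_zero) p).hasFDerivAt
  have h1 : HasFDerivAt (fun pt => 2 * φ pt / c^2) ((2/c^2) • fderiv ℝ φ p) p := by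
    have := hdφ.const_mul (2/c^2)
    convert this using 2 with pt
    case e'_11 => ring
    all_goals rfl
  have h2 := h1.exp
  have h3 := h2.const_mul ((m * c^2 / 2) * (γ₀^2)⁻¹)
  have hfd : fderiv ℝ (fun pt => (m * c^2 / 2) * (γ₀^2)⁻¹ * Real.exp (2 * φ pt / c^2)) p
      = ((m * c^2 / 2) * (γ₀^2)⁻¹) • (Real.exp (2 * φ p / c^2) • ((2/c^2) • fderiv ℝ φ p)) :=
    h3.fderiv
  have hmain := (heom t ht i).const_mul m
  convert hmain using 1
  · rfl
  · rfl
  rw [hfd]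
  simp only [ContinuousLinearMap.smul_apply, smul_eq_mul]
  have hval : (m * c^2 / 2) * (γ₀^2)⁻¹ * (Real.exp (2 * φ p / c^2) * ((2/c^2) * fderiv ℝ φ p (Pi.single i 1)))
      = m * ((γ₀^2)⁻¹ * Real.exp (2 * φ p / c^2)) * fderiv ℝ φ p (Pi.single i 1) := by
    field_simp
  rw [hval, key]
  ring
end

section
/- Let c>0, 0≤β<1, γ = 1/√(1−β²), and let φ:ℝ→ℝ be continuously differentiable. Suppose t,x,y,z : I→ℝ are twice differentiable with 0∈I and satisfy on I the proper-time equations ẗ = −ṫ·ż·φ′(z)/c², ẍ = −ẋ·ż·φ′(z)/c², ÿ = −ẏ·ż·φ′(z)/c², with initial conditions ṫ(0)=γ, ẋ(0)=cβγ, ẏ(0)=0, and φ(z(0))=0. Then for all τ∈I: ṫ(τ) = γ·exp(−φ(z(τ))/c²), ẋ(τ) = cβγ·exp(−φ(z(τ))/c²), and ẏ(τ) = 0. -/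
lemma first_integral_aux (c : ℝ) (hc : c ≠ 0) (φ : ℝ → ℝ) (hφ : Differentiable ℝ φ)
    (I : Set ℝ) (hI : Convex ℝ I) (h0 : (0:ℝ) ∈ I)
    (z z' u' : ℝ → ℝ)
    (hz' : ∀ τ ∈ I, HasDerivAt z (z' τ) τ)
    (hu : ∀ τ ∈ I, HasDerivAt u' (-(u' τ * z' τ * deriv φ (z τ)) / c^2) τ)
    (hφ0 : φ (z 0) = 0) :
    ∀ τ ∈ I, u' τ = u' 0 * Real.exp (-(φ (z τ)) / c^2) := by
  set e : ℝ → ℝ := fun s => Real.exp (φ (z s) / c^2) with he_def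
  have key : ∀ s ∈ I, HasDerivAt (fun r => u' r * e r) 0 s := by
    intro s hs
    have hz := hz' s hs
    have hφz : HasDerivAt (fun r => φ (z r)) (deriv φ (z s) * z' s) s :=
      ((hφ (z s)).hasDerivAt).comp s hz
    have hdiv : HasDerivAt (fun r => φ (z r) / c^2) (deriv φ (z s) * z' s / c^2) s :=
      hφz.div_const _
    have he : HasDerivAt e (Real.exp (φ (z s) / c^2) * (deriv φ (z s) * z' s / c^2)) s :=
      (Real.hasDerivAt_exp _).comp s hdiv
    have h := (hu s hs).mul he
    convert (show HasDerivAt (fun r => u' r * e r) _ s from h) using 1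
    simp only [he_def]
    field_simp
    ring
  have hconst : ∀ τ ∈ I, u' τ * e τ = u' 0 * e 0 := by
    intro τ hτ
    have := hI.norm_image_sub_le_of_norm_hasDerivWithin_le
      (f' := fun _ => (0:ℝ)) (C := 0)
      (fun s hs => (key s hs).hasDerivWithinAt)
      (fun s hs => by simp) h0 hτ
    simp only [mul_zero, zero_mul, norm_le_zero_iff, sub_eq_zero] at this
    exact this
  intro τ hτ
  have h := hconst τ hτ
  have he0 : e 0 = 1 := by simp [he_def, hφ0]
  rw [he0, mul_one] at h
  have : Real.exp (-(φ (z τ)) / c^2) = (e τ)⁻¹ := by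
    rw [he_def]
    simp [neg_div, Real.exp_neg]
  rw [this]
  have hpos : e τ ≠ 0 := (Real.exp_pos _).ne'
  field_simp
  linarith [h]

/-- First integrals of the `t`, `x`, `y` proper-time equations of motion of the scalar
model-theory in a potential `φ` depending only on `z`:
from `ẗ = -ṫ ż φ′(z)/c²`, `ẍ = -ẋ ż φ′(z)/c²`, `ÿ = -ẏ ż φ′(z)/c²` with
`ṫ(0) = γ`, `ẋ(0) = cβγ`, `ẏ(0) = 0` and `φ(z(0)) = 0` one gets
`ṫ = γ e^{-φ(z)/c²}`, `ẋ = cβγ e^{-φ(z)/c²}`, `ẏ = 0`. -/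
theorem first_integrals_horizontal
    (c β : ℝ) (hc : 0 < c) (hβ0 : 0 ≤ β) (hβ1 : β < 1)
    (γ : ℝ) (hγ : γ = 1 / Real.sqrt (1 - β^2))
    (φ : ℝ → ℝ) (hφ : ContDiff ℝ 1 φ)
    (I : Set ℝ) (hI : Convex ℝ I) (h0 : (0:ℝ) ∈ I)
    (t x y z t' x' y' z' : ℝ → ℝ)
    (ht' : ∀ τ ∈ I, HasDerivAt t (t' τ) τ)
    (hx' : ∀ τ ∈ I, HasDerivAt x (x' τ) τ)
    (hy' : ∀ τ ∈ I, HasDerivAt y (y' τ) τ)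
    (hz' : ∀ τ ∈ I, HasDerivAt z (z' τ) τ)
    (hteq : ∀ τ ∈ I, HasDerivAt t' (-(t' τ * z' τ * deriv φ (z τ)) / c^2) τ)
    (hxeq : ∀ τ ∈ I, HasDerivAt x' (-(x' τ * z' τ * deriv φ (z τ)) / c^2) τ)
    (hyeq : ∀ τ ∈ I, HasDerivAt y' (-(y' τ * z' τ * deriv φ (z τ)) / c^2) τ)
    (ht0 : t' 0 = γ) (hx0 : x' 0 = c * β * γ) (hy0 : y' 0 = 0)
    (hφ0 : φ (z 0) = 0) :
    ∀ τ ∈ I,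
      t' τ = γ * Real.exp (-(φ (z τ)) / c^2) ∧
      x' τ = c * β * γ * Real.exp (-(φ (z τ)) / c^2) ∧
      y' τ = 0 := by
  have hφd : Differentiable ℝ φ := hφ.differentiable one_ne_zero
  have hc' : c ≠ 0 := hc.ne'
  intro τ hτ
  refine ⟨?_, ?_, ?_⟩
  · rw [first_integral_aux c hc' φ hφd I hI h0 z z' t' hz' hteq hφ0 τ hτ, ht0]
  · rw [first_integral_aux c hc' φ hφd I hI h0 z z' x' hz' hxeq hφ0 τ hτ, hx0]
  · rw [first_integral_aux c hc' φ hφd I hI h0 z z' y' hz' hyeq hφ0 τ hτ, hy0, zero_mul]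
end

section
/- Let c>0 and let φ:ℝ→ℝ be continuously differentiable. Suppose z:I→ℝ is twice differentiable with 0∈I and satisfies z̈(τ) = −(1+ż(τ)²/c²)·φ′(z(τ)) on I, with ż(0)=0 and φ(z(0))=0. Then for all τ∈I: (1+ż(τ)²/c²)·exp(2φ(z(τ))/c²) = 1; equivalently ż(τ)² = c²·(exp(−2φ(z(τ))/c²) − 1). -/
/-- First integral of the vertical proper-time equation of motion
`z̈ = -(1 + ż²/c²) φ′(z)` of the scalar model-theory: with `ż(0) = 0` and
`φ(z(0)) = 0` one has `(1 + ż²/c²) e^{2φ(z)/c²} = 1`, equivalently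
`ż² = c² (e^{-2φ(z)/c²} - 1)`. -/
theorem first_integral_vertical
    (c : ℝ) (hc : 0 < c)
    (φ : ℝ → ℝ) (hφ : ContDiff ℝ 1 φ)
    (I : Set ℝ) (hI : Convex ℝ I) (h0 : (0:ℝ) ∈ I)
    (z z' : ℝ → ℝ)
    (hz' : ∀ τ ∈ I, HasDerivAt z (z' τ) τ)
    (hzeq : ∀ τ ∈ I, HasDerivAt z' (-(1 + (z' τ)^2 / c^2) * deriv φ (z τ)) τ)
    (hz'0 : z' 0 = 0)
    (hφ0 : φ (z 0) = 0) :
    ∀ τ ∈ I,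
      (1 + (z' τ)^2 / c^2) * Real.exp (2 * φ (z τ) / c^2) = 1 ∧
      (z' τ)^2 = c^2 * (Real.exp (-(2 * φ (z τ)) / c^2) - 1) := by
  have hc2 : (c:ℝ)^2 ≠ 0 := pow_ne_zero 2 hc.ne'
  set E : ℝ → ℝ := fun τ => (1 + (z' τ)^2 / c^2) * Real.exp (2 * φ (z τ) / c^2) with hE
  have hdφ : Differentiable ℝ φ := hφ.differentiable one_ne_zero
  have hEderiv : ∀ τ ∈ I, HasDerivAt E 0 τ := by
    intro τ hτ
    have h1 : HasDerivAt (fun t => φ (z t)) (deriv φ (z τ) * z' τ) τ :=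
      (hdφ (z τ)).hasDerivAt.comp τ (hz' τ hτ)
    have h2 : HasDerivAt (fun t => Real.exp (2 * φ (z t) / c^2))
        (Real.exp (2 * φ (z τ) / c^2) * (2 * (deriv φ (z τ) * z' τ) / c^2)) τ := by
      have := ((h1.const_mul 2).div_const (c^2)).exp
      simpa using this
    have h3 : HasDerivAt (fun t => 1 + (z' t)^2 / c^2)
        (2 * z' τ * (-(1 + (z' τ)^2 / c^2) * deriv φ (z τ)) / c^2) τ := by
      have := (((hzeq τ hτ).pow 2).div_const (c^2)).const_add 1
      simpa [mul_comm, mul_assoc] using this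
    have := h3.mul h2
    refine this.congr_deriv ?_
    ring
  have hconst : ∀ τ ∈ I, E τ = E 0 := by
    intro τ hτ
    have := Convex.norm_image_sub_le_of_norm_hasFDerivWithin_le
      (f := E) (f' := fun _ => ContinuousLinearMap.smulRight (1 : ℝ →L[ℝ] ℝ) (0:ℝ)) (C := 0)
      (fun x hx => (hEderiv x hx).hasFDerivAt.hasFDerivWithinAt (s := I))
      (fun x _ => by simp) hI h0 hτ
    simp only [zero_mul, norm_le_zero_iff, sub_eq_zero] at this
    exact this
  have hE0 : E 0 = 1 := by simp [hE, hz'0, hφ0]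
  intro τ hτ
  have h1 : (1 + (z' τ)^2 / c^2) * Real.exp (2 * φ (z τ) / c^2) = 1 := by
    have := hconst τ hτ; rw [hE0] at this; exact this
  refine ⟨h1, ?_⟩
  have hexp : Real.exp (-(2 * φ (z τ)) / c^2) = (Real.exp (2 * φ (z τ) / c^2))⁻¹ := by
    rw [← Real.exp_neg]; ring_nf
  rw [hexp]
  have hne : Real.exp (2 * φ (z τ) / c^2) ≠ 0 := (Real.exp_pos _).ne'
  have h2 : (c^2 + (z' τ)^2) * Real.exp (2 * φ (z τ) / c^2) = c^2 := by
    field_simp at h1 ⊢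
    linarith [h1]
  field_simp
  nlinarith [h2]
end

section
/- Let c>0, g>0, 0≤β<1, γ = 1/√(1−β²), and let φ(z) = c²·ln(1+gz/c²) for z>−c²/g. Then the curve defined for τ∈(−c/g, c/g) by t(τ) = (γc/g)·arcsin(gτ/c), x(τ) = cβ·(γc/g)·arcsin(gτ/c), y(τ) = 0, z(τ) = −(c²/g)·(1 − √(1−(gτ/c)²)) satisfies z(τ) > −c²/g, the equations ẗ = −ṫ·ż·φ′(z)/c², ẍ = −ẋ·ż·φ′(z)/c², ÿ = −ẏ·ż·φ′(z)/c², z̈ = −(1+ż²/c²)·φ′(z), the normalization c²ṫ² − ẋ² − ẏ² − ż² = c², and the initial conditions t(0)=x(0)=y(0)=z(0)=0, ṫ(0)=γ, ẋ(0)=cβγ, ẏ(0)=ż(0)=0. -/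
open Real

set_option maxHeartbeats 4000000 in
/-- The explicit free-fall solution of the scalar model-theory in the homogeneous field
`Φ(z) = g z`, i.e. with potential `φ(z) = c² ln(1 + gz/c²)`: the curve
`t(τ) = (γc/g) arcsin(gτ/c)`, `x(τ) = cβ (γc/g) arcsin(gτ/c)`, `y = 0`,
`z(τ) = -(c²/g)(1 - √(1-(gτ/c)²))` satisfies, for `τ ∈ (-c/g, c/g)`, `z > -c²/g`,
the proper-time equations of motion, the normalization `c²ṫ² - ẋ² - ẏ² - ż² = c²`,
and the stated initial conditions. -/
theorem homogeneous_field_free_fall_solution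
    (c g β : ℝ) (hc : 0 < c) (hg : 0 < g) (hβ0 : 0 ≤ β) (hβ1 : β < 1)
    (γ : ℝ) (hγ : γ = 1 / Real.sqrt (1 - β^2))
    (φ t x y z : ℝ → ℝ)
    (hφ : φ = fun w => c^2 * Real.log (1 + g * w / c^2))
    (ht : t = fun τ => (γ * c / g) * Real.arcsin (g * τ / c))
    (hx : x = fun τ => c * β * ((γ * c / g) * Real.arcsin (g * τ / c)))
    (hy : y = fun _ => 0)
    (hz : z = fun τ => -(c^2 / g) * (1 - Real.sqrt (1 - (g * τ / c)^2))) :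
    (∀ τ ∈ Set.Ioo (-(c / g)) (c / g),
      z τ > -(c^2 / g) ∧
      deriv (deriv t) τ = -(deriv t τ * deriv z τ * deriv φ (z τ)) / c^2 ∧
      deriv (deriv x) τ = -(deriv x τ * deriv z τ * deriv φ (z τ)) / c^2 ∧
      deriv (deriv y) τ = -(deriv y τ * deriv z τ * deriv φ (z τ)) / c^2 ∧
      deriv (deriv z) τ = -(1 + (deriv z τ)^2 / c^2) * deriv φ (z τ) ∧
      c^2 * (deriv t τ)^2 - (deriv x τ)^2 - (deriv y τ)^2 - (deriv z τ)^2 = c^2) ∧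
    t 0 = 0 ∧ x 0 = 0 ∧ y 0 = 0 ∧ z 0 = 0 ∧
    deriv t 0 = γ ∧ deriv x 0 = c * β * γ ∧ deriv y 0 = 0 ∧ deriv z 0 = 0 := by
  have hc0 : c ≠ 0 := ne_of_gt hc
  have hg0 : g ≠ 0 := ne_of_gt hg
  -- the open set where things are smooth
  set S : Set ℝ := {τ | (g * τ / c)^2 < 1} with hS
  have hSopen : IsOpen S := isOpen_lt (by continuity) continuous_const
  -- candidate derivative functions
  set T' : ℝ → ℝ := fun τ => γ / Real.sqrt (1 - (g * τ / c)^2) with hT'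
  set Z' : ℝ → ℝ := fun τ => -(c * (g * τ / c)) / Real.sqrt (1 - (g * τ / c)^2) with hZ'
  -- basic facts on S
  have key : ∀ τ ∈ S, HasDerivAt t (T' τ) τ ∧ HasDerivAt x (c * β * T' τ) τ ∧
      HasDerivAt z (Z' τ) τ := by
    intro τ hτ
    have hu2 : (g * τ / c)^2 < 1 := hτ
    have hpos : 0 < 1 - (g * τ / c)^2 := by linarith
    have hsq : 0 < Real.sqrt (1 - (g * τ / c)^2) := Real.sqrt_pos.mpr hpos
    have hsqne : Real.sqrt (1 - (g * τ / c)^2) ≠ 0 := ne_of_gt hsq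
    have h1 : g * τ / c ≠ -1 := by intro h; rw [h] at hu2; norm_num at hu2
    have h2 : g * τ / c ≠ 1 := by intro h; rw [h] at hu2; norm_num at hu2
    have hinner : HasDerivAt (fun τ => g * τ / c) (g / c) τ := by
      simpa using ((hasDerivAt_id τ).const_mul g).div_const c
    have harc : HasDerivAt (fun τ => Real.arcsin (g * τ / c))
        ((1 / Real.sqrt (1 - (g * τ / c)^2)) * (g / c)) τ := by
      have := (Real.hasDerivAt_arcsin h1 h2).comp τ hinner; exact this
    have hT : HasDerivAt t (T' τ) τ := by
      rw [ht]
      have := harc.const_mul (γ * c / g)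
      refine this.congr_deriv ?_
      rw [hT']; beta_reduce
      generalize Real.sqrt (1 - (g * τ / c)^2) = s at hsqne ⊢
      field_simp
    have hX : HasDerivAt x (c * β * T' τ) τ := by
      rw [hx]
      have := harc.const_mul (c * β * (γ * c / g))
      convert this using 1
      · rfl
      · rfl
      · ext σ; ring
      · rw [hT']; beta_reduce
        generalize Real.sqrt (1 - (g * τ / c)^2) = s at hsqne ⊢
        field_simp
    have hZ : HasDerivAt z (Z' τ) τ := by
      rw [hz]
      have hsqrt := (((hinner.pow 2).const_sub 1).sqrt (ne_of_gt hpos)).const_sub 1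
      have := hsqrt.const_mul (-(c^2 / g))
      refine this.congr_deriv ?_
      rw [hZ']
      norm_num
      generalize Real.sqrt (1 - (g * τ / c)^2) = s at hsqne ⊢
      field_simp
    exact ⟨hT, hX, hZ⟩
  have hderiv_t : ∀ τ ∈ S, deriv t τ = T' τ := fun τ hτ => (key τ hτ).1.deriv
  have hderiv_x : ∀ τ ∈ S, deriv x τ = c * β * T' τ := fun τ hτ => (key τ hτ).2.1.deriv
  have hderiv_z : ∀ τ ∈ S, deriv z τ = Z' τ := fun τ hτ => (key τ hτ).2.2.deriv
  have hmem : ∀ τ ∈ Set.Ioo (-(c / g)) (c / g), τ ∈ S := by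
    intro τ hτ
    obtain ⟨hτ1, hτ2⟩ := hτ
    have hcg : g * (c / g) = c := by field_simp
    have h2' : g * τ < c := by nlinarith [mul_lt_mul_of_pos_left hτ2 hg]
    have h1' : -c < g * τ := by nlinarith [mul_lt_mul_of_pos_left hτ1 hg]
    have hA : g * τ / c < 1 := by rw [div_lt_one hc]; linarith
    have hB : (-1:ℝ) < g * τ / c := by
      rw [lt_div_iff₀ hc]; linarith
    show (g * τ / c)^2 < 1
    nlinarith
  have h0S : (0:ℝ) ∈ S := by
    show (g * 0 / c)^2 < 1
    norm_num
  have hcg_pos : 0 < c / g := by positivity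
  have h0Ioo : (0:ℝ) ∈ Set.Ioo (-(c / g)) (c / g) := ⟨by linarith, hcg_pos⟩
  constructor
  · intro τ hτ
    have hτS : τ ∈ S := hmem τ hτ
    have hu2 : (g * τ / c)^2 < 1 := hτS
    have hpos : 0 < 1 - (g * τ / c)^2 := by linarith
    set s := Real.sqrt (1 - (g * τ / c)^2) with hs
    have hsq : 0 < s := Real.sqrt_pos.mpr hpos
    have hsqne : s ≠ 0 := ne_of_gt hsq
    have hs2 : s^2 = 1 - (g * τ / c)^2 := Real.sq_sqrt (le_of_lt hpos)
    clear_value s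
    have hsqne' : Real.sqrt (1 - (g * τ / c)^2) ≠ 0 := by rw [← hs]; exact hsqne
    -- z τ > -c²/g
    have hzval : z τ = -(c^2 / g) * (1 - s) := by rw [hz, hs]
    have hzgt : z τ > -(c^2 / g) := by
      rw [hzval]
      have hcg2 : 0 < c^2 / g := by positivity
      nlinarith
    -- φ'(z τ)
    have hphi_arg : 1 + g * z τ / c^2 = s := by
      rw [hzval]; field_simp; ring
    have hphi_ne : 1 + g * z τ / c^2 ≠ 0 := by rw [hphi_arg]; exact hsqne
    have hphi : HasDerivAt φ (c^2 * ((g / c^2) / s)) (z τ) := by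
      rw [hφ]
      have hinner : HasDerivAt (fun w => 1 + g * w / c^2) (g / c^2) (z τ) := by
        simpa using (((hasDerivAt_id (z τ)).const_mul g).div_const (c^2)).const_add 1
      have := (hinner.log hphi_ne).const_mul (c^2)
      rw [hphi_arg] at this
      convert this using 1
    have hφ' : deriv φ (z τ) = g / s := by
      rw [hphi.deriv]; field_simp
    -- derivative of the candidate derivative functions
    have hinner : HasDerivAt (fun σ => g * σ / c) (g / c) τ := by
      simpa using ((hasDerivAt_id τ).const_mul g).div_const c
    have hsqrt_deriv : HasDerivAt (fun σ => Real.sqrt (1 - (g * σ / c)^2))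
        (-(2 * (g * τ / c) * (g / c)) / (2 * s)) τ := by
      have := ((hinner.pow 2).const_sub 1).sqrt (ne_of_gt hpos)
      refine this.congr_deriv ?_
      rw [hs]; norm_num
    have hT'deriv : HasDerivAt T' (γ * (g * τ / c) * (g / c) / (s^2 * s)) τ := by
      have := (hasDerivAt_const τ γ).div hsqrt_deriv hsqne'
      refine this.congr_deriv ?_
      rw [← hs]
      field_simp
      ring
    have hZ'deriv : HasDerivAt Z' (-(g * s^2 + g * (g*τ/c)^2) / (s^2 * s)) τ := by
      have hnum : HasDerivAt (fun σ => -(c * (g * σ / c))) (-(c * (g / c))) τ := by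
        exact (hinner.const_mul c).neg
      have := hnum.div hsqrt_deriv hsqne'
      refine this.congr_deriv ?_
      rw [← hs]
      field_simp
      ring
    have hev_t : deriv t =ᶠ[nhds τ] T' := by
      filter_upwards [hSopen.mem_nhds hτS] with σ hσ using hderiv_t σ hσ
    have hev_x : deriv x =ᶠ[nhds τ] (fun σ => c * β * T' σ) := by
      filter_upwards [hSopen.mem_nhds hτS] with σ hσ using hderiv_x σ hσ
    have hev_z : deriv z =ᶠ[nhds τ] Z' := by
      filter_upwards [hSopen.mem_nhds hτS] with σ hσ using hderiv_z σ hσ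
    have hddt : deriv (deriv t) τ = γ * (g * τ / c) * (g / c) / (s^2 * s) := by
      rw [hev_t.deriv_eq]; exact hT'deriv.deriv
    have hddx : deriv (deriv x) τ = c * β * (γ * (g * τ / c) * (g / c) / (s^2 * s)) := by
      rw [hev_x.deriv_eq]; exact (hT'deriv.const_mul (c * β)).deriv
    have hddz : deriv (deriv z) τ = -(g * s^2 + g * (g*τ/c)^2) / (s^2 * s) := by
      rw [hev_z.deriv_eq]; exact hZ'deriv.deriv
    have hdy : deriv y = fun _ => (0:ℝ) := by rw [hy]; ext σ; simp
    have hddy : deriv (deriv y) τ = 0 := by rw [hdy]; simp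
    have hdtτ : deriv t τ = γ / s := by
      rw [hderiv_t τ hτS]; simp only [hT']; rw [hs]
    have hdxτ : deriv x τ = c * β * (γ / s) := by
      rw [hderiv_x τ hτS]; simp only [hT']; rw [hs]
    have hdzτ : deriv z τ = -(c * (g * τ / c)) / s := by
      rw [hderiv_z τ hτS]; simp only [hZ']; rw [hs]
    have hdyτ : deriv y τ = 0 := by rw [hdy]
    -- γ² (1-β²) = 1
    have hβpos : 0 < 1 - β^2 := sub_pos.mpr (pow_lt_one₀ hβ0 hβ1 two_ne_zero)
    have hγ2 : γ^2 * (1 - β^2) = 1 := by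
      rw [hγ, div_pow, one_pow, Real.sq_sqrt (le_of_lt hβpos)]
      exact one_div_mul_cancel (ne_of_gt hβpos)
    clear_value T' Z' S
    clear key hev_t hev_x hev_z hT'deriv hZ'deriv hsqrt_deriv hphi hinner
      hderiv_t hderiv_x hderiv_z hmem hphi_ne hphi_arg hzval hSopen
    refine ⟨hzgt, ?_, ?_, ?_, ?_, ?_⟩
    · rw [hddt, hdtτ, hdzτ, hφ']
      field_simp
      try tauto
    · rw [hddx, hdxτ, hdzτ, hφ']
      field_simp
      try tauto
    · rw [hddy, hdyτ]; simp
    · rw [hddz, hdzτ, hφ']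
      field_simp
      try tauto
    · rw [hdtτ, hdxτ, hdyτ, hdzτ]
      have key2 : c^2*γ^2 - (c*β)^2*γ^2 - (c*(g*τ/c))^2 = c^2 * s^2 := by
        linear_combination c^2*hγ2 - c^2*hs2
      have e : c^2 * (γ/s)^2 - (c*β*(γ/s))^2 - (0:ℝ)^2 - (-(c*(g*τ/c))/s)^2
          = (c^2*γ^2 - (c*β)^2*γ^2 - (c*(g*τ/c))^2)/s^2 := by
        field_simp
        ring_nf
        try tauto
      rw [e, key2, mul_div_assoc, div_self (pow_ne_zero 2 hsqne), mul_one]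
  · -- initial conditions
    have ht0 : t 0 = 0 := by rw [ht]; simp
    have hx0 : x 0 = 0 := by rw [hx]; simp
    have hy0 : y 0 = 0 := by rw [hy]
    have hz0 : z 0 = 0 := by rw [hz]; simp
    have hdt0 : deriv t 0 = γ := by
      rw [hderiv_t 0 h0S, hT']; simp
    have hdx0 : deriv x 0 = c * β * γ := by
      rw [hderiv_x 0 h0S, hT']; simp
    have hdy0 : deriv y 0 = 0 := by rw [hy]; simp
    have hdz0 : deriv z 0 = 0 := by
      rw [hderiv_z 0 h0S, hZ']; simp
    exact ⟨ht0, hx0, hy0, hz0, hdt0, hdx0, hdy0, hdz0⟩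
end

section
/- Let c>0, g>0, 0≤β<1, γ = 1/√(1−β²), and let t(τ) = (γc/g)·arcsin(gτ/c), z(τ) = −(c²/g)·(1 − √(1−(gτ/c)²)). Then for every h with 0<h≤c²/g, the coordinate time elapsed until the falling body reaches z=−h is t_h := t(τ_h) = γ·(2c/g)·arcsin(√(gh/(2c²))), where τ_h = (c/g)·√(1−(1−gh/c²)²) is the proper time with z(τ_h)=−h. In particular t_h = γ·t_h|_{β=0}, so the coordinate drop time depends on the initial horizontal velocity through the factor γ. -/
/-!
Put `u = gh/c²`. Then `gτ_h/c = √(1-(1-u)²) = 2x√(1-x²)` with `x = √(u/2)`, which is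
`sin (2 arcsin x)` by the double-angle formula; since `x ≤ √2/2`, the angle `2 arcsin x` stays
in `[-π/2, π/2]`, where `arcsin` inverts `sin`.
-/

open Real

theorem Real.abs_arcsin_le_pi_div_four {x : ℝ} (hx : |x| ≤ √2 / 2) : |arcsin x| ≤ π / 4 := by
  have h := arcsin_le_arcsin hx
  rw [← sin_pi_div_four, arcsin_sin (by linarith [pi_pos]) (by linarith [pi_pos])] at h
  rcases le_total 0 x with hx0 | hx0
  · rwa [abs_of_nonneg (arcsin_nonneg.2 hx0), ← abs_of_nonneg hx0]
  · rwa [abs_of_nonpos (arcsin_nonpos.2 hx0), ← arcsin_neg, ← abs_of_nonpos hx0]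

theorem Real.arcsin_two_mul_mul_sqrt_one_sub_sq {x : ℝ} (hx : |x| ≤ √2 / 2) :
    arcsin (2 * x * √(1 - x ^ 2)) = 2 * arcsin x := by
  have hx1 : |x| ≤ 1 :=
    hx.trans (by nlinarith [sq_sqrt (show (0:ℝ) ≤ 2 by norm_num), sqrt_nonneg 2])
  obtain ⟨hlo, hhi⟩ := abs_le.1 (abs_arcsin_le_pi_div_four hx)
  have hsin : sin (2 * arcsin x) = 2 * x * √(1 - x ^ 2) := by
    rw [sin_two_mul, sin_arcsin (abs_le.1 hx1).1 (abs_le.1 hx1).2, cos_arcsin]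
  rw [← hsin, arcsin_sin (by linarith) (by linarith)]

theorem Real.arcsin_sqrt_one_sub_one_sub_sq {u : ℝ} (hu0 : 0 ≤ u) (hu1 : u ≤ 1) :
    arcsin √(1 - (1 - u) ^ 2) = 2 * arcsin √(u / 2) := by
  have hx : |√(u / 2)| ≤ √2 / 2 := by
    rw [abs_of_nonneg (sqrt_nonneg _), sqrt_le_left (by positivity), div_pow,
      sq_sqrt zero_le_two]
    linarith
  rw [← arcsin_two_mul_mul_sqrt_one_sub_sq hx, sq_sqrt (by positivity)]
  congr 1
  rw [show 1 - (1 - u) ^ 2 = 2 ^ 2 * (u / 2 * (1 - u / 2)) by ring, sqrt_mul (by positivity),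
    sqrt_sq zero_le_two, sqrt_mul (by positivity), mul_assoc]

theorem scalar_theory_coordinate_drop_time_general
    (c g : ℝ) (hc : 0 < c) (hg : 0 < g)
    (γ : ℝ)
    (t z : ℝ → ℝ)
    (ht : t = fun τ => (γ * c / g) * Real.arcsin (g * τ / c))
    (hz : z = fun τ => -(c^2 / g) * (1 - Real.sqrt (1 - (g * τ / c)^2))) :
    ∀ h : ℝ, 0 < h → h ≤ c^2 / g →
      z ((c / g) * Real.sqrt (1 - (1 - g * h / c^2)^2)) = -h ∧
      t ((c / g) * Real.sqrt (1 - (1 - g * h / c^2)^2)) =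
        γ * ((2 * c / g) * Real.arcsin (Real.sqrt (g * h / (2 * c^2)))) := by
  intro h h0 hh
  have hu0 : 0 ≤ g * h / c ^ 2 := by positivity
  have hu1 : g * h / c ^ 2 ≤ 1 := by
    rwa [div_le_one (by positivity), ← le_div_iff₀' hg]
  have hcancel : ∀ s, g * (c / g * s) / c = s := fun s => by field_simp
  have hsq_nonneg : 0 ≤ 1 - (1 - g * h / c ^ 2) ^ 2 := by nlinarith
  subst ht hz
  refine ⟨?_, ?_⟩
  · simp only [hcancel]
    rw [sq_sqrt hsq_nonneg, sub_sub_cancel, sqrt_sq (by linarith)]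
    field_simp
    ring
  · simp only [hcancel]
    rw [show g * h / (2 * c ^ 2) = g * h / c ^ 2 / 2 by ring,
      arcsin_sqrt_one_sub_one_sub_sq hu0 hu1]
    ring

/-- For the free-fall solution `t(τ) = (γc/g) arcsin(gτ/c)`,
`z(τ) = -(c²/g)(1-√(1-(gτ/c)²))` of the scalar model-theory, for every `0 < h ≤ c²/g`
the coordinate time elapsed until the body reaches `z = -h` is
`t_h = t(τ_h) = γ (2c/g) arcsin(√(gh/(2c²)))`, where `τ_h = (c/g)√(1-(1-gh/c²)²)` is
the proper time with `z(τ_h) = -h`; in particular `t_h` equals `γ` times its value at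
`β = 0` (`γ = 1`), so the coordinate drop time depends on the initial horizontal
velocity through the factor `γ`. -/
theorem scalar_theory_coordinate_drop_time
    (c g β : ℝ) (hc : 0 < c) (hg : 0 < g) (hβ0 : 0 ≤ β) (hβ1 : β < 1)
    (γ : ℝ) (hγ : γ = 1 / Real.sqrt (1 - β^2))
    (t z : ℝ → ℝ)
    (ht : t = fun τ => (γ * c / g) * Real.arcsin (g * τ / c))
    (hz : z = fun τ => -(c^2 / g) * (1 - Real.sqrt (1 - (g * τ / c)^2))) :
    ∀ h : ℝ, 0 < h → h ≤ c^2 / g →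
      z ((c / g) * Real.sqrt (1 - (1 - g * h / c^2)^2)) = -h ∧
      t ((c / g) * Real.sqrt (1 - (1 - g * h / c^2)^2)) =
        γ * ((2 * c / g) * Real.arcsin (Real.sqrt (g * h / (2 * c^2)))) :=
  scalar_theory_coordinate_drop_time_general c g hc hg γ t z ht hz
end

section
/- Let c>0, g>0, and define z(τ) = (c²/g)·ln(cos(gτ/c)) for τ∈[0, πc/(2g)). Then z(0)=0, z is the solution of the naive scalar theory's vertical first integral ż(τ) = −c·√(exp(−2g z(τ)/c²) − 1) on [0, πc/(2g)) (equivalently of z̈ = −(1+ż²/c²)·g with ż(0)=0), and z(τ) → −∞ as τ → (πc/(2g))⁻. Hence in the naive theory the freely falling particle reaches z = −∞ within the finite proper time τ_* = πc/(2g). -/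
open Real

/-- In the naive scalar theory in the homogeneous field `φ(z) = gz`, the vertical
free-fall solution `z(τ) = (c²/g) ln(cos(gτ/c))` on `[0, πc/(2g))` starts at `z(0) = 0`,
satisfies the first integral `ż = -c√(e^{-2gz/c²} - 1)` (equivalently the equation of
motion `z̈ = -(1+ż²/c²) g` with `ż(0) = 0`), and `z(τ) → -∞` as `τ → (πc/(2g))⁻`:
the particle reaches `z = -∞` within the finite proper time `τ_* = πc/(2g)`. -/
theorem naive_theory_reaches_infinity_in_finite_proper_time
    (c g : ℝ) (hc : 0 < c) (hg : 0 < g)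
    (z : ℝ → ℝ)
    (hz : z = fun τ => (c^2 / g) * Real.log (Real.cos (g * τ / c))) :
    z 0 = 0 ∧
    (∀ τ ∈ Set.Ico (0:ℝ) (π * c / (2 * g)),
      HasDerivAt z (-(c * Real.sqrt (Real.exp (-(2 * g * z τ) / c^2) - 1))) τ) ∧
    deriv z 0 = 0 ∧
    (∀ τ ∈ Set.Ico (0:ℝ) (π * c / (2 * g)),
      deriv (deriv z) τ = -(1 + (deriv z τ)^2 / c^2) * g) ∧
    Filter.Tendsto z (nhdsWithin (π * c / (2 * g)) (Set.Iio (π * c / (2 * g))))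
      Filter.atBot := by
  have hcne : c ≠ 0 := hc.ne'
  have hgne : g ≠ 0 := hg.ne'
  set b : ℝ := π * c / (2 * g) with hb
  have hbpos : 0 < b := by
    apply div_pos (mul_pos pi_pos hc) (by positivity)
  -- membership facts
  have hmem : ∀ τ ∈ Set.Ioo (-b) b, g * τ / c ∈ Set.Ioo (-(π/2)) (π/2) := by
    rintro τ ⟨h1, h2⟩
    constructor
    · rw [lt_div_iff₀ hc]
      have h3 : g * (-b) < g * τ := (mul_lt_mul_iff_right₀ hg).2 h1
      calc -(π/2) * c = g * (-b) := by rw [hb]; field_simp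
        _ < g * τ := h3
    · rw [div_lt_iff₀ hc]
      have h3 : g * τ < g * b := (mul_lt_mul_iff_right₀ hg).2 h2
      calc g * τ < g * b := h3
        _ = π/2 * c := by rw [hb]; field_simp
  have hcospos : ∀ τ ∈ Set.Ioo (-b) b, 0 < Real.cos (g * τ / c) := fun τ hτ =>
    Real.cos_pos_of_mem_Ioo (hmem τ hτ)
  have hinner : ∀ τ : ℝ, HasDerivAt (fun t : ℝ => g * t / c) (g / c) τ := by
    intro τ
    simpa using ((hasDerivAt_id τ).const_mul g).div_const c
  -- derivative on the open interval
  have hderivAll : ∀ τ ∈ Set.Ioo (-b) b,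
      HasDerivAt z (-(c * Real.tan (g * τ / c))) τ := by
    intro τ hτ
    have hcosp := hcospos τ hτ
    have hcosd : HasDerivAt (fun t : ℝ => Real.cos (g * t / c))
        (-Real.sin (g * τ / c) * (g / c)) τ :=
      by have h := (Real.hasDerivAt_cos (g * τ / c)).comp τ (hinner τ); exact h
    have hlogd : HasDerivAt (fun t : ℝ => Real.log (Real.cos (g * t / c)))
        ((Real.cos (g * τ / c))⁻¹ * (-Real.sin (g * τ / c) * (g / c))) τ :=
      by have h := (Real.hasDerivAt_log hcosp.ne').comp τ hcosd; exact h
    have h := hlogd.const_mul (c^2 / g)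
    rw [hz]
    refine h.congr_deriv ?_
    rw [Real.tan_eq_sin_div_cos]
    field_simp
  have hIcoSub : ∀ τ ∈ Set.Ico (0:ℝ) b, τ ∈ Set.Ioo (-b) b := fun τ hτ =>
    ⟨lt_of_lt_of_le (neg_lt_zero.2 hbpos) hτ.1, hτ.2⟩
  -- z 0 = 0
  have h0 : z 0 = 0 := by simp [hz]
  -- sqrt identity on [0, b)
  have hsqrt : ∀ τ ∈ Set.Ico (0:ℝ) b,
      Real.sqrt (Real.exp (-(2 * g * z τ) / c^2) - 1) = Real.tan (g * τ / c) := by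
    intro τ hτ
    have hτI := hIcoSub τ hτ
    have hcosp := hcospos τ hτI
    set x := g * τ / c with hx
    have hx0 : 0 ≤ x := div_nonneg (mul_nonneg hg.le hτ.1) hc.le
    have hsin : 0 ≤ Real.sin x := Real.sin_nonneg_of_nonneg_of_le_pi hx0
      (le_trans (hmem τ hτI).2.le (by linarith [pi_pos]))
    have htan : 0 ≤ Real.tan x := by
      rw [Real.tan_eq_sin_div_cos]; positivity
    have hexp : Real.exp (-(2 * g * z τ) / c^2) = (Real.cos x ^ 2)⁻¹ := by
      have hzv : z τ = (c^2 / g) * Real.log (Real.cos x) := by rw [hz]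
      have harg : -(2 * g * z τ) / c^2 = -(2 * Real.log (Real.cos x)) := by
        rw [hzv]; field_simp
      have h2l : 2 * Real.log (Real.cos x) = Real.log (Real.cos x ^ 2) := by
        rw [Real.log_pow]; push_cast; ring
      rw [harg, h2l, Real.exp_neg, Real.exp_log (by positivity)]
    rw [hexp]
    have : (Real.cos x ^ 2)⁻¹ - 1 = Real.tan x ^ 2 := by
      have hpy := Real.sin_sq_add_cos_sq x
      rw [Real.tan_eq_sin_div_cos, div_pow]
      have hc2 : Real.cos x ^ 2 ≠ 0 := by positivity
      field_simp
      nlinarith [hpy]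
    rw [this, Real.sqrt_sq htan]
  have hfirst : ∀ τ ∈ Set.Ico (0:ℝ) b,
      HasDerivAt z (-(c * Real.sqrt (Real.exp (-(2 * g * z τ) / c^2) - 1))) τ := by
    intro τ hτ
    rw [hsqrt τ hτ]
    exact hderivAll τ (hIcoSub τ hτ)
  refine ⟨h0, hfirst, ?_, ?_, ?_⟩
  · -- deriv z 0 = 0
    have := (hderivAll 0 ⟨neg_lt_zero.2 hbpos, hbpos⟩).deriv
    simpa using this
  · -- second derivative
    intro τ hτ
    have hτI := hIcoSub τ hτ
    have hcosp := hcospos τ hτI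
    have hev : deriv z =ᶠ[nhds τ] fun s => -(c * Real.tan (g * s / c)) := by
      filter_upwards [isOpen_Ioo.mem_nhds hτI] with s hs
      exact (hderivAll s hs).deriv
    have htand : HasDerivAt (fun s : ℝ => -(c * Real.tan (g * s / c)))
        (-(c * (1 / Real.cos (g * τ / c) ^ 2 * (g / c)))) τ :=
      by have h := (((Real.hasDerivAt_tan hcosp.ne').comp τ (hinner τ)).const_mul c).neg; exact h
    have hd1 : deriv z τ = -(c * Real.tan (g * τ / c)) := (hderivAll τ hτI).deriv
    rw [hev.deriv_eq, htand.deriv, hd1]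
    have h1' : 1 + Real.tan (g * τ / c) ^ 2 = (Real.cos (g * τ / c) ^ 2)⁻¹ := by
      rw [← Real.inv_one_add_tan_sq hcosp.ne', inv_inv]
    have h2 : (-(c * Real.tan (g * τ / c))) ^ 2 / c ^ 2 = Real.tan (g * τ / c) ^ 2 := by
      field_simp
    rw [h2, h1']
    have hc2 : Real.cos (g * τ / c) ^ 2 ≠ 0 := by positivity
    field_simp
  · -- tendsto atBot
    have hπ2 : g * b / c = π / 2 := by rw [hb]; field_simp
    have hcos0 : Filter.Tendsto (fun τ => Real.cos (g * τ / c)) (nhdsWithin b (Set.Iio b))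
        (nhdsWithin 0 (Set.Ioi 0)) := by
      rw [tendsto_nhdsWithin_iff]
      constructor
      · have hcont : Filter.Tendsto (fun τ => Real.cos (g * τ / c)) (nhds b)
            (nhds (Real.cos (g * b / c))) :=
          (Real.continuous_cos.comp ((continuous_const.mul continuous_id).div_const c)).tendsto b
        rw [hπ2, Real.cos_pi_div_two] at hcont
        exact hcont.mono_left nhdsWithin_le_nhds
      · filter_upwards [Ioo_mem_nhdsLT_of_mem (⟨by linarith, le_refl b⟩ : b ∈ Set.Ioc (-b) b)]
          with s hs
        exact hcospos s hs
    have hlog : Filter.Tendsto (fun τ => Real.log (Real.cos (g * τ / c)))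
        (nhdsWithin b (Set.Iio b)) Filter.atBot :=
      Real.tendsto_log_nhdsGT_zero.comp hcos0
    rw [hz]
    exact Filter.Tendsto.const_mul_atBot (by positivity) hlog
end

section
/- Let c>0, g>0, and let z(τ) = (c²/g)·ln(cos(gτ/c)) for τ∈[0, πc/(2g)). Then for every h>0, the proper time τ_h := (c/g)·arccos(exp(−hg/c²)) lies in [0, πc/(2g)), satisfies z(τ_h) = −h, and is the unique such τ. In particular τ_h is independent of the initial horizontal velocity parameter β, and τ_h < πc/(2g) for all h>0 with sup_{h>0} τ_h = πc/(2g). -/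
open Real

/-- For the naive-scalar-theory free-fall solution `z(τ) = (c²/g) ln(cos(gτ/c))`:
for every `h > 0` the proper time `τ_h = (c/g) arccos(e^{-hg/c²})` lies in
`[0, πc/(2g))`, satisfies `z(τ_h) = -h`, and is the unique such proper time (in
particular it is independent of the initial horizontal velocity); moreover
`τ_h < πc/(2g)` for all `h > 0` and `sup_{h>0} τ_h = πc/(2g)`. -/
theorem naive_theory_proper_drop_time
    (c g : ℝ) (hc : 0 < c) (hg : 0 < g)
    (z : ℝ → ℝ)
    (hz : z = fun τ => (c^2 / g) * Real.log (Real.cos (g * τ / c))) :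
    (∀ h : ℝ, 0 < h →
      (c / g) * Real.arccos (Real.exp (-(h * g) / c^2)) ∈
        Set.Ico (0:ℝ) (π * c / (2 * g)) ∧
      z ((c / g) * Real.arccos (Real.exp (-(h * g) / c^2))) = -h ∧
      (∀ τ ∈ Set.Ico (0:ℝ) (π * c / (2 * g)), z τ = -h →
        τ = (c / g) * Real.arccos (Real.exp (-(h * g) / c^2)))) ∧
    IsLUB ((fun h => (c / g) * Real.arccos (Real.exp (-(h * g) / c^2))) ''
      Set.Ioi (0:ℝ)) (π * c / (2 * g)) := by
  subst hz
  have hc2 : (0:ℝ) < c^2 := pow_pos hc 2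
  have key : ∀ h : ℝ, 0 < h →
      (c / g) * Real.arccos (Real.exp (-(h * g) / c^2)) ∈
        Set.Ico (0:ℝ) (π * c / (2 * g)) := by
    intro h hh
    have hx0 : (0:ℝ) < Real.exp (-(h * g) / c^2) := Real.exp_pos _
    have hlt : Real.arccos (Real.exp (-(h * g) / c^2)) < π / 2 :=
      Real.arccos_lt_pi_div_two.2 hx0
    constructor
    · exact mul_nonneg (by positivity) (Real.arccos_nonneg _)
    · have h1 : (c / g) * Real.arccos (Real.exp (-(h * g) / c^2)) < (c / g) * (π / 2) :=
        mul_lt_mul_of_pos_left hlt (div_pos hc hg)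
      calc (c / g) * Real.arccos (Real.exp (-(h * g) / c^2)) < (c / g) * (π / 2) := h1
        _ = π * c / (2 * g) := by ring
  have zval : ∀ h : ℝ, 0 < h →
      (fun τ => (c^2 / g) * Real.log (Real.cos (g * τ / c)))
        ((c / g) * Real.arccos (Real.exp (-(h * g) / c^2))) = -h := by
    intro h hh
    have hx0 : (0:ℝ) < Real.exp (-(h * g) / c^2) := Real.exp_pos _
    have hx1 : Real.exp (-(h * g) / c^2) ≤ 1 := by
      rw [Real.exp_le_one_iff, neg_div]
      have : (0:ℝ) < h * g := mul_pos hh hg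
      have := div_pos this hc2
      linarith
    have harg : g * ((c / g) * Real.arccos (Real.exp (-(h * g) / c^2))) / c
        = Real.arccos (Real.exp (-(h * g) / c^2)) := by
      field_simp
    simp only [harg]
    rw [Real.cos_arccos (by linarith) hx1, Real.log_exp]
    field_simp
  constructor
  · intro h hh
    refine ⟨key h hh, zval h hh, ?_⟩
    intro τ hτ hzτ
    obtain ⟨hτ0, hτlt⟩ := hτ
    have harg : g * τ / c < π / 2 := by
      rw [lt_div_iff₀ (by positivity : (0:ℝ) < 2 * g)] at hτlt
      rw [div_lt_iff₀ hc]
      nlinarith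
    have harg0 : 0 ≤ g * τ / c := by positivity
    have hcospos : 0 < Real.cos (g * τ / c) :=
      Real.cos_pos_of_mem_Ioo ⟨by linarith [Real.pi_pos], harg⟩
    have hlogeq : Real.log (Real.cos (g * τ / c)) = -(h * g) / c^2 := by
      have : (c^2 / g) * Real.log (Real.cos (g * τ / c)) = -h := hzτ
      field_simp at this ⊢
      linarith
    have hcoseq : Real.cos (g * τ / c) = Real.exp (-(h * g) / c^2) := by
      rw [← hlogeq, Real.exp_log hcospos]
    have : Real.arccos (Real.exp (-(h * g) / c^2)) = g * τ / c := by
      rw [← hcoseq, Real.arccos_cos harg0 (by linarith [Real.pi_pos, harg, Real.pi_gt_three])]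
    rw [this]; field_simp
  · constructor
    · rintro x ⟨h, hh, rfl⟩
      exact ((key h hh).2).le
    · intro b hb
      by_contra hlt
      push_neg at hlt
      have hub : (0:ℝ) < π * c / (2 * g) := by positivity
      obtain ⟨t, ht1, ht2⟩ := exists_between (max_lt hlt hub)
      have ht0 : 0 < t := lt_of_le_of_lt (le_max_right b 0) ht1
      have htb : b < t := lt_of_le_of_lt (le_max_left b 0) ht1
      have harg : g * t / c < π / 2 := by
        rw [lt_div_iff₀ (by positivity : (0:ℝ) < 2 * g)] at ht2
        rw [div_lt_iff₀ hc]
        nlinarith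
      have harg0 : 0 < g * t / c := by positivity
      have hcospos : 0 < Real.cos (g * t / c) :=
        Real.cos_pos_of_mem_Ioo ⟨by linarith [Real.pi_pos], harg⟩
      have hcoslt : Real.cos (g * t / c) < 1 := by
        have := Real.cos_lt_cos_of_nonneg_of_le_pi le_rfl
          (by linarith [Real.pi_pos] : g * t / c ≤ π) harg0
        simpa using this
      set h : ℝ := -(c^2 / g) * Real.log (Real.cos (g * t / c)) with hdef
      have hlogneg : Real.log (Real.cos (g * t / c)) < 0 :=
        Real.log_neg hcospos hcoslt
      have hh : 0 < h := by
        have : 0 < c^2 / g := by positivity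
        nlinarith
      have hexp : Real.exp (-(h * g) / c^2) = Real.cos (g * t / c) := by
        have : -(h * g) / c^2 = Real.log (Real.cos (g * t / c)) := by
          rw [hdef]; field_simp
        rw [this, Real.exp_log hcospos]
      have htau : (c / g) * Real.arccos (Real.exp (-(h * g) / c^2)) = t := by
        rw [hexp, Real.arccos_cos harg0.le (by linarith [Real.pi_pos])]
        field_simp
      have : t ≤ b := htau ▸ hb ⟨h, hh, rfl⟩
      linarith
end

section
/- Let c>0, 𝓔>0, 0≤β<1, γ = 1/√(1−β²). Then the curve defined for all τ∈ℝ by t(τ) = (γ/𝓔)·sinh(𝓔τ), x(τ) = cβγτ, y(τ) = 0, z(τ) = −(2cγ/𝓔)·sinh²(𝓔τ/2) satisfies the vector theory's proper-time equations of motion c·ẗ = −𝓔·ż, ẍ = 0, ÿ = 0, z̈ = −𝓔·c·ṫ, the normalization c²ṫ² − ẋ² − ẏ² − ż² = c², and the initial conditions t(0)=x(0)=y(0)=z(0)=0, ṫ(0)=γ, ẋ(0)=cβγ, ẏ(0)=ż(0)=0. -/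
private lemma dsinh_aux (a k : ℝ) :
    deriv (fun τ : ℝ => a * Real.sinh (k * τ)) = fun τ => a * k * Real.cosh (k * τ) := by
  funext τ
  have h1 : HasDerivAt (fun τ : ℝ => k * τ) k τ := by
    simpa using (hasDerivAt_id τ).const_mul k
  have h2 := ((Real.hasDerivAt_sinh (k * τ)).comp τ h1).const_mul a
  simpa [mul_comm, mul_assoc, mul_left_comm] using h2.deriv

private lemma dcosh_aux (a b k : ℝ) :
    deriv (fun τ : ℝ => a * (Real.cosh (k * τ) - b)) = fun τ => a * k * Real.sinh (k * τ) := by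
  funext τ
  have h1 : HasDerivAt (fun τ : ℝ => k * τ) k τ := by
    simpa using (hasDerivAt_id τ).const_mul k
  have h2 := (((Real.hasDerivAt_cosh (k * τ)).comp τ h1).sub_const b).const_mul a
  simpa [mul_comm, mul_assoc, mul_left_comm] using h2.deriv

/-- The explicit free-fall solution of the vector (spin-1) theory in a static homogeneous
vertical field: the curve `t(τ) = (γ/𝓔) sinh(𝓔τ)`, `x(τ) = cβγτ`, `y = 0`,
`z(τ) = -(2cγ/𝓔) sinh²(𝓔τ/2)` satisfies the proper-time equations of motion
`c ẗ = -𝓔 ż`, `ẍ = 0`, `ÿ = 0`, `z̈ = -𝓔 c ṫ`, the normalization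
`c²ṫ² - ẋ² - ẏ² - ż² = c²`, and the stated initial conditions. -/
theorem vector_theory_free_fall_solution
    (c ℰ β : ℝ) (hc : 0 < c) (hℰ : 0 < ℰ) (hβ0 : 0 ≤ β) (hβ1 : β < 1)
    (γ : ℝ) (hγ : γ = 1 / Real.sqrt (1 - β^2))
    (t x y z : ℝ → ℝ)
    (ht : t = fun τ => (γ / ℰ) * Real.sinh (ℰ * τ))
    (hx : x = fun τ => c * β * γ * τ)
    (hy : y = fun _ => 0)
    (hz : z = fun τ => -(2 * c * γ / ℰ) * Real.sinh (ℰ * τ / 2)^2) :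
    (∀ τ : ℝ,
      c * deriv (deriv t) τ = -(ℰ * deriv z τ) ∧
      deriv (deriv x) τ = 0 ∧
      deriv (deriv y) τ = 0 ∧
      deriv (deriv z) τ = -(ℰ * c * deriv t τ) ∧
      c^2 * (deriv t τ)^2 - (deriv x τ)^2 - (deriv y τ)^2 - (deriv z τ)^2 = c^2) ∧
    t 0 = 0 ∧ x 0 = 0 ∧ y 0 = 0 ∧ z 0 = 0 ∧
    deriv t 0 = γ ∧ deriv x 0 = c * β * γ ∧ deriv y 0 = 0 ∧ deriv z 0 = 0 := by
  have hℰ' : ℰ ≠ 0 := ne_of_gt hℰ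
  -- rewrite z into cosh form
  have hz' : z = fun τ => -(c * γ / ℰ) * (Real.cosh (ℰ * τ) - 1) := by
    rw [hz]; funext τ
    have h2 : Real.cosh (2 * (ℰ * τ / 2)) =
        Real.cosh (ℰ * τ / 2) ^ 2 + Real.sinh (ℰ * τ / 2) ^ 2 := Real.cosh_two_mul _
    have h3 : Real.sinh (ℰ * τ / 2) ^ 2 = Real.cosh (ℰ * τ / 2) ^ 2 - 1 :=
      Real.sinh_sq _
    have h4 : (2 : ℝ) * (ℰ * τ / 2) = ℰ * τ := by ring
    rw [h4] at h2
    have hs : Real.sinh (ℰ * τ / 2) ^ 2 = (Real.cosh (ℰ * τ) - 1) / 2 := by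
      linarith
    rw [hs]; ring
  -- first derivatives
  have ht1 : deriv t = fun τ => γ * Real.cosh (ℰ * τ) := by
    rw [ht, dsinh_aux]; funext τ; field_simp
  have hx1 : deriv x = fun _ => c * β * γ := by
    rw [hx]; funext τ
    simpa using ((hasDerivAt_id τ).const_mul (c * β * γ)).deriv
  have hy1 : deriv y = fun _ => 0 := by
    rw [hy]; funext τ; simp
  have hz1 : deriv z = fun τ => -(c * γ) * Real.sinh (ℰ * τ) := by
    rw [hz', dcosh_aux]; funext τ; field_simp
  -- second derivatives
  have ht2 : deriv (deriv t) = fun τ => γ * ℰ * Real.sinh (ℰ * τ) := by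
    rw [ht1]
    have : (fun τ => γ * Real.cosh (ℰ * τ)) = fun τ => γ * (Real.cosh (ℰ * τ) - 0) := by
      funext τ; ring
    rw [this, dcosh_aux]
  have hx2 : deriv (deriv x) = fun _ => (0 : ℝ) := by
    rw [hx1]; funext τ; simp
  have hy2 : deriv (deriv y) = fun _ => (0 : ℝ) := by
    rw [hy1]; funext τ; simp
  have hz2 : deriv (deriv z) = fun τ => -(c * γ) * ℰ * Real.cosh (ℰ * τ) := by
    rw [hz1, dsinh_aux]
  -- gamma squared
  have hβ2 : (0 : ℝ) < 1 - β ^ 2 := by nlinarith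
  have hγ2 : γ ^ 2 * (1 - β ^ 2) = 1 := by
    rw [hγ]
    rw [div_pow, one_pow, Real.sq_sqrt (le_of_lt hβ2)]
    field_simp
  refine ⟨fun τ => ?_, ?_, ?_, ?_, ?_, ?_, ?_, ?_, ?_⟩
  · refine ⟨?_, ?_, ?_, ?_, ?_⟩
    · rw [ht2, hz1]; ring
    · rw [hx2]
    · rw [hy2]
    · rw [hz2, ht1]; ring
    · rw [ht1, hx1, hy1, hz1]
      have hch : Real.cosh (ℰ * τ) ^ 2 = Real.sinh (ℰ * τ) ^ 2 + 1 := Real.cosh_sq _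
      simp only []
      linear_combination c^2*γ^2*hch + c^2*hγ2
  · rw [ht]; simp
  · rw [hx]; simp
  · rw [hy]
  · rw [hz]; simp
  · rw [ht1]; simp
  · rw [hx1]
  · rw [hy1]
  · rw [hz1]; simp
end

section
/- Let c>0, 𝓔>0, 0≤β<1, γ = 1/√(1−β²), and let t(τ) = (γ/𝓔)·sinh(𝓔τ), z(τ) = −(2cγ/𝓔)·sinh²(𝓔τ/2). Then for every h>0 the proper time τ_h := (2/𝓔)·arcsinh(√(𝓔h/(2γc))) satisfies z(τ_h) = −h and is the unique nonnegative such τ, and the corresponding coordinate time is t_h := t(τ_h) = (γ/𝓔)·√((1+𝓔h/(γc))² − 1). In particular, in the vector theory the proper free-fall time τ_h depends on the initial horizontal velocity parameter γ. -/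
/-- For the vector theory's free-fall solution `t(τ) = (γ/𝓔) sinh(𝓔τ)`,
`z(τ) = -(2cγ/𝓔) sinh²(𝓔τ/2)`: for every `h > 0` the proper time
`τ_h = (2/𝓔) arcsinh(√(𝓔h/(2γc)))` satisfies `z(τ_h) = -h`, is the unique nonnegative
such proper time, and the corresponding coordinate time is
`t_h = t(τ_h) = (γ/𝓔)√((1+𝓔h/(γc))² - 1)`; in particular `τ_h` depends on the initial
horizontal velocity through `γ`. -/
theorem vector_theory_drop_times
    (c ℰ β : ℝ) (hc : 0 < c) (hℰ : 0 < ℰ) (hβ0 : 0 ≤ β) (hβ1 : β < 1)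
    (γ : ℝ) (hγ : γ = 1 / Real.sqrt (1 - β^2))
    (t z : ℝ → ℝ)
    (ht : t = fun τ => (γ / ℰ) * Real.sinh (ℰ * τ))
    (hz : z = fun τ => -(2 * c * γ / ℰ) * Real.sinh (ℰ * τ / 2)^2) :
    ∀ h : ℝ, 0 < h →
      z ((2 / ℰ) * Real.arsinh (Real.sqrt (ℰ * h / (2 * γ * c)))) = -h ∧
      (∀ τ : ℝ, 0 ≤ τ → z τ = -h →
        τ = (2 / ℰ) * Real.arsinh (Real.sqrt (ℰ * h / (2 * γ * c)))) ∧
      t ((2 / ℰ) * Real.arsinh (Real.sqrt (ℰ * h / (2 * γ * c)))) =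
        (γ / ℰ) * Real.sqrt ((1 + ℰ * h / (γ * c))^2 - 1) := by
  have h1β : 0 < 1 - β ^ 2 := by nlinarith
  have hγpos : 0 < γ := by
    rw [hγ]
    positivity
  intro h hh
  set x : ℝ := ℰ * h / (2 * γ * c) with hx
  have hxpos : 0 < x := by positivity
  set u : ℝ := Real.arsinh (Real.sqrt x) with hu
  have hsinh : Real.sinh u = Real.sqrt x := Real.sinh_arsinh _
  have harg : ℰ * ((2 / ℰ) * u) / 2 = u := by field_simp
  have harg2 : ℰ * ((2 / ℰ) * u) = 2 * u := by field_simp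
  have hsq : Real.sinh u ^ 2 = x := by
    rw [hsinh, Real.sq_sqrt hxpos.le]
  constructor
  · rw [hz]
    simp only [harg, hsq]
    rw [hx]
    field_simp
  constructor
  · intro τ hτ hzτ
    rw [hz] at hzτ
    simp only at hzτ
    have hs2 : Real.sinh (ℰ * τ / 2) ^ 2 = x := by
      rw [hx]
      field_simp at hzτ ⊢
      nlinarith [hzτ]
    have hsnn : 0 ≤ Real.sinh (ℰ * τ / 2) :=
      Real.sinh_nonneg_iff.mpr (by positivity)
    have hseq : Real.sinh (ℰ * τ / 2) = Real.sqrt x := by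
      rw [← Real.sqrt_sq hsnn, hs2]
    have : ℰ * τ / 2 = u := by
      rw [hu, ← hseq, Real.arsinh_sinh]
    field_simp at this ⊢
    linarith
  · rw [ht]
    simp only [harg2]
    rw [Real.sinh_two_mul, hsinh]
    have hcosh : Real.cosh u = Real.sqrt (1 + x) := by
      rw [hu, Real.cosh_arsinh, Real.sq_sqrt hxpos.le, add_comm]
    rw [hcosh]
    have h2x : 2 * x = ℰ * h / (γ * c) := by rw [hx]; ring
    have hkey : (1 + ℰ * h / (γ * c)) ^ 2 - 1 = (2 * Real.sqrt x * Real.sqrt (1 + x)) ^ 2 := by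
      rw [← h2x, mul_pow, mul_pow, Real.sq_sqrt hxpos.le, Real.sq_sqrt (by linarith : (0:ℝ) ≤ 1 + x)]
      ring
    rw [hkey, Real.sqrt_sq (by positivity)]
end

section
/- Let c>0, m>0, and let U:（0,∞)→ℝ be continuously differentiable. Consider a planar trajectory given in polar coordinates by differentiable functions r(t)>0 and φ(t) with φ′(t)≠0, speed v(t)² = r′(t)² + r(t)²φ′(t)² < c², and γ(t)=1/√(1−v(t)²/c²). Suppose the angular momentum L = γ(t)·m·r(t)²·φ′(t) and the energy E = mc²·(γ(t)−1) + U(r(t)) are constant. Then the orbit satisfies, for all t, (L²/(m²·r⁴))·( (dr/dφ)² + r² ) = (2/m)·( Ẽ − Ũ(r) ), where dr/dφ := r′(t)/φ′(t), Ẽ := E·(1 + E/(2mc²)), and Ũ(r) := U(r)·(1 + E/(mc²)) − U(r)²/(2mc²). -/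
/-- For a planar trajectory `(r(t), φ(t))` in a central potential `U` in the vector
theory, with conserved angular momentum `L = γ m r² φ′` and conserved energy
`E = mc²(γ-1) + U(r)`, the orbit satisfies
`(L²/(m²r⁴))((dr/dφ)² + r²) = (2/m)(Ẽ - Ũ(r))` where `dr/dφ = r′/φ′`,
`Ẽ = E(1 + E/(2mc²))` and `Ũ(r) = U(r)(1 + E/(mc²)) - U(r)²/(2mc²)`. -/
theorem vector_theory_orbit_equation
    (c m : ℝ) (hc : 0 < c) (hm : 0 < m)
    (U : ℝ → ℝ) (hU : ContDiffOn ℝ 1 U (Set.Ioi 0))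
    (I : Set ℝ)
    (r θ r' θ' : ℝ → ℝ)
    (hr' : ∀ t ∈ I, HasDerivAt r (r' t) t)
    (hθ' : ∀ t ∈ I, HasDerivAt θ (θ' t) t)
    (hrpos : ∀ t ∈ I, 0 < r t)
    (hθne : ∀ t ∈ I, θ' t ≠ 0)
    (hv : ∀ t ∈ I, (r' t)^2 + (r t)^2 * (θ' t)^2 < c^2)
    (γ : ℝ → ℝ)
    (hγ : γ = fun t => 1 / Real.sqrt (1 - ((r' t)^2 + (r t)^2 * (θ' t)^2) / c^2))
    (L E : ℝ)
    (hL : ∀ t ∈ I, L = γ t * m * (r t)^2 * θ' t)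
    (hE : ∀ t ∈ I, E = m * c^2 * (γ t - 1) + U (r t)) :
    ∀ t ∈ I,
      (L^2 / (m^2 * (r t)^4)) * ((r' t / θ' t)^2 + (r t)^2) =
        (2 / m) * ((E * (1 + E / (2 * m * c^2))) -
          (U (r t) * (1 + E / (m * c^2)) - (U (r t))^2 / (2 * m * c^2))) := by
  intro t ht
  have hcne : c ≠ 0 := hc.ne'
  have hmne : m ≠ 0 := hm.ne'
  have hrne : r t ≠ 0 := (hrpos t ht).ne'
  have hθn : θ' t ≠ 0 := hθne t ht
  set v2 := (r' t)^2 + (r t)^2 * (θ' t)^2 with hv2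
  have hvlt : v2 < c^2 := hv t ht
  have hpos : 0 < 1 - v2 / c^2 := by
    have : v2 / c^2 < 1 := (div_lt_one (by positivity)).2 hvlt
    linarith
  have hγt : γ t = 1 / Real.sqrt (1 - v2 / c^2) := by rw [hγ]
  have hγ2 : (γ t)^2 * (1 - v2 / c^2) = 1 := by
    rw [hγt, div_pow, one_pow, Real.sq_sqrt hpos.le]
    field_simp
    have hpos2 : 0 < (c^2 - v2) * c^2 := mul_pos (by linarith) (by positivity)
    rw [div_self (sub_pos.2 hvlt).ne']
  have hγ2' : (γ t)^2 * (c^2 - v2) = c^2 := by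
    have h := hγ2
    have hne : c^2 - v2 ≠ 0 := by nlinarith
    field_simp at h ⊢
    nlinarith [h]
  rw [hL t ht, hE t ht]
  field_simp
  linear_combination (-(m^2*c^2)) * hγ2'
end
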